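/- arXiv:2504.05942 — 4 statements merged into one kernel-verified Lean document; each statement's English description precedes it below -/
import Mathlib

section
/- Let $a > 0$, let $U_i$ be a finite nonempty upwind stencil with displacements $\Delta x_{ik} = x_k - x_i < 0$ and weights $w_{ik} > 0$ for all $k \in U_i$, and define the forward Euler update $u_i^{n+1} = u_i^n - a \Delta t\, \frac{\sum_{k \in U_i} w_{ik} \Delta x_{ik} (u_k^n - u_i^n)}{\sum_{k \in U_i} w_{ik} \Delta x_{ik}^2}$ with $\Delta t > 0$. If the CFL condition $1 + a \Delta t\, \frac{\sum_{k \in U_i} w_{ik} \Delta x_{ik}}{\sum_{k \in U_i} w_{ik} \Delta x_{ik}^2} \geq 0$ holds, then $u_i^{n+1}$ is a convex combination of $u_i^n$ and the values $u_k^n$, $k \in U_i$: the coefficient of each $u_k^n$ is $-a\Delta t\, w_{ik}\Delta x_{ik} / \sum_k w_{ik}\Delta x_{ik}^2 \geq 0$, the coefficient of $u_i^n$ is $1 + a \Delta t \sum_k w_{ik}\Delta x_{ik} / \sum_k w_{ik}\Delta x_{ik}^2 \geq 0$, all coefficients sum to $1$, and consequently $\min\big(u_i^n, \min_{k \in U_i}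 u_k^n\big) \leq u_i^{n+1} \leq \max\big(u_i^n, \max_{k \in U_i} u_k^n\big)$. -/
/-!
Expanding `u_k - u_i` splits the update into `(1 + λ ∑ w dx / D) u_i + ∑ (-λ w dx / D) u_k` with
`λ = a Δt` and `D = ∑ w dx²`. Upwinding (`dx < 0`) makes every neighbour coefficient nonnegative,
the CFL condition is exactly nonnegativity of the centre coefficient, and the coefficients sum to
one for any `D`; a convex combination lies between the minimum and the maximum of its values.
-/

open Finset

section ConvexCombination

variable {ι R : Type*} [CommSemiring R] [PartialOrder R] [IsOrderedRing R]
  {s : Finset ι} {c : ι → R} {x : ι → R} {c₀ x₀ m : R}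

theorem le_convex_combination (hc₀ : 0 ≤ c₀) (hc : ∀ k ∈ s, 0 ≤ c k)
    (hsum : c₀ + ∑ k ∈ s, c k = 1) (hx₀ : m ≤ x₀) (hx : ∀ k ∈ s, m ≤ x k) :
    m ≤ c₀ * x₀ + ∑ k ∈ s, c k * x k :=
  calc m = c₀ * m + ∑ k ∈ s, c k * m := by rw [← sum_mul, ← add_mul, hsum, one_mul]
    _ ≤ c₀ * x₀ + ∑ k ∈ s, c k * x k :=
      add_le_add (mul_le_mul_of_nonneg_left hx₀ hc₀)
        (sum_le_sum fun k hk => mul_le_mul_of_nonneg_left (hx k hk) (hc k hk))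

theorem convex_combination_le (hc₀ : 0 ≤ c₀) (hc : ∀ k ∈ s, 0 ≤ c k)
    (hsum : c₀ + ∑ k ∈ s, c k = 1) (hx₀ : x₀ ≤ m) (hx : ∀ k ∈ s, x k ≤ m) :
    c₀ * x₀ + ∑ k ∈ s, c k * x k ≤ m :=
  calc c₀ * x₀ + ∑ k ∈ s, c k * x k ≤ c₀ * m + ∑ k ∈ s, c k * m :=
      add_le_add (mul_le_mul_of_nonneg_left hx₀ hc₀)
        (sum_le_sum fun k hk => mul_le_mul_of_nonneg_left (hx k hk) (hc k hk))
    _ = m := by rw [← sum_mul, ← add_mul, hsum, one_mul]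

end ConvexCombination

section UpwindScheme

variable {ι : Type*} (S : Finset ι) (c D : ℝ) (dx w : ι → ℝ)

theorem upwind_coeff_nonneg {k : ι} (hc : 0 ≤ c) (hD : 0 ≤ D) (hdx : dx k ≤ 0)
    (hw : 0 ≤ w k) : 0 ≤ -(c * w k * dx k) / D :=
  div_nonneg (neg_nonneg.mpr (mul_nonpos_of_nonneg_of_nonpos (mul_nonneg hc hw) hdx)) hD

theorem upwind_coeffs_sum_eq_one :
    (1 + c * (∑ k ∈ S, w k * dx k) / D) + ∑ k ∈ S, -(c * w k * dx k) / D = 1 := by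
  rw [← sum_div, sum_neg_distrib, mul_sum]
  simp only [mul_assoc]
  ring

theorem upwind_update_eq_combination (un : ι → ℝ) (ui : ℝ) :
    ui - c * (∑ k ∈ S, w k * dx k * (un k - ui)) / D =
      (1 + c * (∑ k ∈ S, w k * dx k) / D) * ui + ∑ k ∈ S, -(c * w k * dx k) / D * un k := by
  have hsplit : ∑ k ∈ S, w k * dx k * (un k - ui) =
      ∑ k ∈ S, w k * dx k * un k - (∑ k ∈ S, w k * dx k) * ui := by
    simp only [mul_sub, sum_sub_distrib, sum_mul]
  have hneighbours : ∑ k ∈ S, -(c * w k * dx k) / D * un k =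
      -(c * ∑ k ∈ S, w k * dx k * un k) / D := by
    rw [mul_sum, ← sum_neg_distrib, sum_div]
    exact sum_congr rfl fun k _ => by ring
  rw [hsplit, hneighbours]
  ring

end UpwindScheme

/-- **Positivity of the first-order 1D meshless upwind scheme under CFL.**
For `a > 0`, an upwind stencil (`Δx k < 0`) with positive weights, and a time step
satisfying the CFL condition, the forward Euler update is a convex combination of the
old stencil values: all coefficients are nonnegative, they sum to one, and the update
satisfies the discrete maximum principle. -/
theorem stmt_5 {ι : Type*} (S : Finset ι) (hS : S.Nonempty)
    (a Δt : ℝ) (ha : 0 < a) (hΔt : 0 < Δt)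
    (dx w : ι → ℝ) (hdx : ∀ k ∈ S, dx k < 0) (hw : ∀ k ∈ S, 0 < w k)
    (un : ι → ℝ) (ui : ℝ)
    (hCFL : 0 ≤ 1 + a * Δt * (∑ k ∈ S, w k * dx k) / (∑ k ∈ S, w k * dx k ^ 2)) :
    (∀ k ∈ S, 0 ≤ -(a * Δt * w k * dx k) / (∑ k ∈ S, w k * dx k ^ 2)) ∧
    0 ≤ 1 + a * Δt * (∑ k ∈ S, w k * dx k) / (∑ k ∈ S, w k * dx k ^ 2) ∧
    ((1 + a * Δt * (∑ k ∈ S, w k * dx k) / (∑ k ∈ S, w k * dx k ^ 2)) +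
        ∑ k ∈ S, -(a * Δt * w k * dx k) / (∑ k ∈ S, w k * dx k ^ 2) = 1) ∧
    min ui (S.inf' hS un) ≤
      ui - a * Δt * (∑ k ∈ S, w k * dx k * (un k - ui)) / (∑ k ∈ S, w k * dx k ^ 2) ∧
    ui - a * Δt * (∑ k ∈ S, w k * dx k * (un k - ui)) / (∑ k ∈ S, w k * dx k ^ 2) ≤
      max ui (S.sup' hS un) := by
  have hD : 0 ≤ ∑ k ∈ S, w k * dx k ^ 2 :=
    sum_nonneg fun k hk => mul_nonneg (hw k hk).le (sq_nonneg _)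
  have hcoeff : ∀ k ∈ S, 0 ≤ -(a * Δt * w k * dx k) / (∑ k ∈ S, w k * dx k ^ 2) :=
    fun k hk => upwind_coeff_nonneg _ _ _ _ (mul_pos ha hΔt).le hD (hdx k hk).le (hw k hk).le
  have hsum := upwind_coeffs_sum_eq_one S (a * Δt) (∑ k ∈ S, w k * dx k ^ 2) dx w
  rw [upwind_update_eq_combination]
  refine ⟨hcoeff, hCFL, hsum, ?_, ?_⟩
  · exact le_convex_combination hCFL hcoeff hsum (min_le_left _ _)
      fun k hk => (min_le_right _ _).trans (inf'_le un hk)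
  · exact convex_combination_le hCFL hcoeff hsum (le_max_left _ _)
      fun k hk => (le_sup' un hk).trans (le_max_right _ _)
end

section
/- Let $a > 0$, let $U_i$ be a finite nonempty upwind stencil with displacements $\Delta x_{ik} < 0$ and weights $w_{ik} > 0$, and consider the forward Euler update $u_i^{n+1} = u_i^n - a \Delta t\, \frac{\sum_{k \in U_i} w_{ik} \Delta x_{ik} (u_k^n - u_i^n)}{\sum_{k \in U_i} w_{ik} \Delta x_{ik}^2}$. If the CFL condition fails, i.e., $1 + a \Delta t\, \frac{\sum_{k} w_{ik} \Delta x_{ik}}{\sum_{k} w_{ik} \Delta x_{ik}^2} < 0$, then there exist nonnegative data (namely $u_i^n = 1$ and $u_k^n = 0$ for all $k \in U_i$) for which $u_i^{n+1} < 0$; hence the scheme is positivity-preserving if and only if the CFL condition holds. -/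
open Finset

/-- **Sharpness of the CFL condition for the first-order 1D upwind scheme.**
If the CFL condition fails, the nonnegative data `u i = 1`, `u k = 0` for `k` in the
upwind stencil yield a negative forward Euler update; hence the scheme is
positivity-preserving if and only if the CFL condition holds. -/
theorem stmt_6 {ι : Type*} (S : Finset ι) (hS : S.Nonempty)
    (a Δt : ℝ) (ha : 0 < a) (hΔt : 0 < Δt)
    (dx w : ι → ℝ) (hdx : ∀ k ∈ S, dx k < 0) (hw : ∀ k ∈ S, 0 < w k) :
    ((1 + a * Δt * (∑ k ∈ S, w k * dx k) / (∑ k ∈ S, w k * dx k ^ 2) < 0) →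
      (1 : ℝ) - a * Δt * (∑ k ∈ S, w k * dx k * ((0 : ℝ) - 1)) /
          (∑ k ∈ S, w k * dx k ^ 2) < 0) ∧
    ((∀ (ui : ℝ) (un : ι → ℝ), 0 ≤ ui → (∀ k ∈ S, 0 ≤ un k) →
        0 ≤ ui - a * Δt * (∑ k ∈ S, w k * dx k * (un k - ui)) /
              (∑ k ∈ S, w k * dx k ^ 2)) ↔
      0 ≤ 1 + a * Δt * (∑ k ∈ S, w k * dx k) / (∑ k ∈ S, w k * dx k ^ 2)) := by
  set N : ℝ := ∑ k ∈ S, w k * dx k with hN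
  set D : ℝ := ∑ k ∈ S, w k * dx k ^ 2 with hD
  have hDpos : 0 < D := by
    apply Finset.sum_pos
    · intro k hk
      exact mul_pos (hw k hk) (by nlinarith [hdx k hk] : (0:ℝ) < dx k ^ 2)
    · exact hS
  have hkey : ∀ ui : ℝ, ∀ un : ι → ℝ,
      (∑ k ∈ S, w k * dx k * (un k - ui)) = (∑ k ∈ S, w k * dx k * un k) - ui * N := by
    intro ui un
    rw [hN, Finset.mul_sum, ← Finset.sum_sub_distrib]
    apply Finset.sum_congr rfl
    intro k hk; ring
  have hneg1 : (∑ k ∈ S, w k * dx k * ((0:ℝ) - 1)) = -N := by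
    rw [hN, ← Finset.sum_neg_distrib]
    apply Finset.sum_congr rfl
    intro k hk; ring
  constructor
  · intro h
    rw [hneg1]
    have : a * Δt * -N / D = -(a * Δt * N / D) := by ring
    rw [this]
    linarith
  · constructor
    · intro h
      have := h 1 (fun _ => 0) zero_le_one (fun k _ => le_refl 0)
      rw [hneg1] at this
      have heq : (1:ℝ) - a * Δt * -N / D = 1 + a * Δt * N / D := by ring
      linarith [heq ▸ this]
    · intro hcfl ui un hui hun
      have hsum_le : (∑ k ∈ S, w k * dx k * un k) ≤ 0 := by
        apply Finset.sum_nonpos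
        intro k hk
        have h0 : 0 ≤ (-(w k * dx k)) * un k :=
          mul_nonneg (by nlinarith [hw k hk, hdx k hk]) (hun k hk)
        nlinarith
      rw [hkey]
      have h1 : ui - a * Δt * ((∑ k ∈ S, w k * dx k * un k) - ui * N) / D
          = ui * (1 + a * Δt * N / D) - a * Δt * (∑ k ∈ S, w k * dx k * un k) / D := by
        field_simp; ring
      rw [h1]
      have h2 : 0 ≤ ui * (1 + a * Δt * N / D) := mul_nonneg hui hcfl
      have h3 : a * Δt * (∑ k ∈ S, w k * dx k * un k) / D ≤ 0 := by
        apply div_nonpos_of_nonpos_of_nonneg _ hDpos.le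
        nlinarith [mul_nonneg (mul_pos ha hΔt).le (neg_nonneg.mpr hsum_le)]
      linarith
end

section
/- Let $u : \mathbb{R} \to \mathbb{R}$ be three times continuously differentiable with $|u'''(x)| \leq M$ for all $x$, let $x_i \in \mathbb{R}$, let $(x_j)_{j \in S}$ be a finite family of points with displacements $\Delta x_j = x_j - x_i$, and let $(\kappa_j)_{j \in S}$ be coefficients satisfying the consistency conditions $\sum_{j} \kappa_j \Delta x_j = 1$ and $\sum_{j} \kappa_j \Delta x_j^2 = 0$. Then the midpoint-based derivative approximation satisfies the second-order error bound $\Big| 2 \sum_{j \in S} \kappa_j \Big( u\big(\tfrac{x_i + x_j}{2}\big) - u(x_i) \Big) - u'(x_i) \Big| \leq \frac{M}{24} \sum_{j \in S} |\kappa_j|\, |\Delta x_j|^3.$ -/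
/-!
Expand `u` to second order about `xᵢ` at each midpoint, i.e. with step `Δxⱼ / 2`. The two
consistency conditions make the first-order terms sum to `u'(xᵢ) / 2` and the second-order terms
cancel, so only the Lagrange remainders survive; each is at most `M |Δxⱼ|³ / 48`, and the factor
two turns this into `M / 24`.
-/

open Finset Set Nat

theorem taylorWithinEval_eq_sum_iteratedDeriv {E : Type*} [NormedAddCommGroup E]
    [NormedSpace ℝ E] {f : ℝ → E} {n : ℕ} {s : Set ℝ} {x₀ : ℝ} (hf : ContDiffAt ℝ n f x₀)
    (hs : UniqueDiffOn ℝ s) (hx₀ : x₀ ∈ s) (x : ℝ) :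
    taylorWithinEval f n s x₀ x =
      ∑ k ∈ range (n + 1), ((k ! : ℝ)⁻¹ * (x - x₀) ^ k) • iteratedDeriv k f x₀ := by
  rw [taylor_within_apply]
  refine sum_congr rfl fun k hk => ?_
  rw [iteratedDerivWithin_eq_iteratedDeriv hs (hf.of_le ?_) hx₀]
  exact_mod_cast Nat.lt_succ_iff.mp (mem_range.mp hk)

theorem abs_sub_taylor_le {f : ℝ → ℝ} {n : ℕ} {M : ℝ} (hf : ContDiff ℝ (n + 1) f)
    (hM : ∀ y, |iteratedDeriv (n + 1) f y| ≤ M) (x₀ x : ℝ) :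
    |f x - ∑ k ∈ range (n + 1), (k ! : ℝ)⁻¹ * (x - x₀) ^ k * iteratedDeriv k f x₀| ≤
      M * |x - x₀| ^ (n + 1) / (n + 1)! := by
  have hfn : ContDiffAt ℝ n f x₀ := (hf.of_le (by norm_cast; omega)).contDiffAt
  rcases eq_or_ne x₀ x with rfl | hx
  · simp [sum_range_succ']
  obtain ⟨c, -, hc⟩ := taylor_mean_remainder_lagrange_iteratedDeriv hx hf.contDiffOn
  rw [taylorWithinEval_eq_sum_iteratedDeriv hfn (uniqueDiffOn_uIcc hx) left_mem_uIcc] at hc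
  simp only [smul_eq_mul] at hc
  rw [hc, abs_div, abs_mul, abs_pow, abs_of_pos (by positivity : (0 : ℝ) < (n + 1)!)]
  gcongr
  exact hM c

theorem abs_sub_taylor_two_le {u : ℝ → ℝ} {M : ℝ} (hu : ContDiff ℝ 3 u)
    (hM : ∀ y, |iteratedDeriv 3 u y| ≤ M) (a y : ℝ) :
    |u y - u a - deriv u a * (y - a) - iteratedDeriv 2 u a * (y - a) ^ 2 / 2| ≤
      M * |y - a| ^ 3 / 6 := by
  have h := abs_sub_taylor_le (n := 2) hu hM a y
  simp only [sum_range_succ, range_one, sum_singleton, iteratedDeriv_zero, iteratedDeriv_one,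
    factorial] at h
  norm_num at h
  convert h using 2
  ring

/-- **Second-order consistency of the midpoint-based MUSCL derivative.**
If `u` is `C³` with `|u'''| ≤ M` and the coefficients `κ j` satisfy the consistency
conditions `∑ κ j Δx j = 1` and `∑ κ j Δx j² = 0`, then the midpoint-based derivative
approximation `2 ∑ κ j (u((x_i + x_j)/2) - u(x_i))` approximates `u'(x_i)` with error
at most `(M/24) ∑ |κ j| |Δx j|³`. -/
theorem stmt_11 {ι : Type*} (S : Finset ι) (u : ℝ → ℝ) (M : ℝ)
    (hu : ContDiff ℝ 3 u) (hM : ∀ x : ℝ, |iteratedDeriv 3 u x| ≤ M)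
    (xi : ℝ) (x : ι → ℝ) (κ : ι → ℝ)
    (h1 : ∑ j ∈ S, κ j * (x j - xi) = 1)
    (h2 : ∑ j ∈ S, κ j * (x j - xi) ^ 2 = 0) :
    |2 * (∑ j ∈ S, κ j * (u ((xi + x j) / 2) - u xi)) - deriv u xi| ≤
      M / 24 * ∑ j ∈ S, |κ j| * |x j - xi| ^ 3 := by
  set R : ι → ℝ := fun j => u ((xi + x j) / 2) - u xi - deriv u xi * ((x j - xi) / 2)
    - iteratedDeriv 2 u xi * ((x j - xi) / 2) ^ 2 / 2 with hR
  have hR_le (j : ι) : |R j| ≤ M / 48 * |x j - xi| ^ 3 := by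
    have h := abs_sub_taylor_two_le hu hM xi ((xi + x j) / 2)
    rw [show (xi + x j) / 2 - xi = (x j - xi) / 2 by ring] at h
    rw [abs_div, abs_two] at h
    linarith
  have h_split (j : ι) : κ j * (u ((xi + x j) / 2) - u xi) = deriv u xi / 2 * (κ j * (x j - xi))
      + iteratedDeriv 2 u xi / 8 * (κ j * (x j - xi) ^ 2) + κ j * R j := by
    rw [hR]; ring
  have h_error : 2 * (∑ j ∈ S, κ j * (u ((xi + x j) / 2) - u xi)) - deriv u xi =
      2 * ∑ j ∈ S, κ j * R j := by
    simp only [h_split, sum_add_distrib, ← mul_sum, h1, h2]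
    ring
  calc |2 * (∑ j ∈ S, κ j * (u ((xi + x j) / 2) - u xi)) - deriv u xi|
      = 2 * |∑ j ∈ S, κ j * R j| := by rw [h_error, abs_mul, abs_two]
    _ ≤ 2 * ∑ j ∈ S, |κ j| * (M / 48 * |x j - xi| ^ 3) := by
        gcongr
        refine (abs_sum_le_sum_abs _ _).trans (sum_le_sum fun j _ => ?_)
        rw [abs_mul]
        gcongr
        exact hR_le j
    _ = M / 24 * ∑ j ∈ S, |κ j| * |x j - xi| ^ 3 := by
        rw [mul_sum, mul_sum]
        exact sum_congr rfl fun j _ => by ring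
end

section
/- Let the advection velocity be $a = (1,1)$. There exist a finite set of points $(x_j, y_j)_{j \in S}$ in $\mathbb{R}^2$, all lying in the upwind quadrant relative to the origin (i.e., $x_j < 0$ and $y_j < 0$ for all $j$) and not all on one line through the origin, together with strictly positive weights $w_j > 0$, such that for some index $j_0 \in S$ the moving least squares coefficient combination satisfies $a_x \alpha_{j_0} + a_y \beta_{j_0} > 0$, where $\alpha_j = \big[\big(\sum_k w_k y_k^2\big) w_j x_j - \big(\sum_k w_k x_k y_k\big) w_j y_j\big]/D$, $\beta_j = \big[\big(\sum_k w_k x_k^2\big) w_j y_j - \big(\sum_k w_k x_k y_k\big) w_j x_j\big]/D$, and $D = \big(\sum_k w_k x_k^2\big)\big(\sum_k w_k y_k^2\big) - \big(\sum_k w_k x_k y_k\big)^2 > 0$. Consequently, for every time step $\Delta t > 0$, the forward Euler update $u_0^{n+1} = u_0^n - \Delta t \sum_j (a_x \alpha_j + a_y \beta_j)(u_j^n - u_0^n)$ has a negative coefficient multiplying $u_{j_0}^n$, so the upwind-quadrant scheme is not a positive scheme. -/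
open Finset

/-- **The upwind-quadrant 2D meshless scheme is not positive.**
For velocity `a = (1,1)` there exists a finite stencil of points in the upwind (third)
quadrant, not all on one line through the origin, with positive weights and positive
Gram determinant, such that for some stencil point `j₀` the MLS coefficient combination
`aₓ α_{j₀} + a_y β_{j₀}` is strictly positive; consequently for every `Δt > 0` the
forward Euler update has a negative coefficient multiplying `u_{j₀}`. -/
theorem stmt_14 :
    ∃ (n : ℕ) (xp yp w : Fin n → ℝ) (j0 : Fin n),
      (∀ j, xp j < 0 ∧ yp j < 0) ∧
      (∀ j, 0 < w j) ∧
      (¬ ∃ v : ℝ × ℝ, ∀ j, ∃ c : ℝ, (xp j, yp j) = c • v) ∧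
      (let D : ℝ := (∑ k, w k * xp k ^ 2) * (∑ k, w k * yp k ^ 2) -
          (∑ k, w k * xp k * yp k) ^ 2
       let α : Fin n → ℝ := fun j =>
          ((∑ k, w k * yp k ^ 2) * w j * xp j -
            (∑ k, w k * xp k * yp k) * w j * yp j) / D
       let β : Fin n → ℝ := fun j =>
          ((∑ k, w k * xp k ^ 2) * w j * yp j -
            (∑ k, w k * xp k * yp k) * w j * xp j) / D
       0 < D ∧
       0 < 1 * α j0 + 1 * β j0 ∧
       ∀ Δt : ℝ, 0 < Δt → -(Δt * (1 * α j0 + 1 * β j0)) < 0) := by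
  refine ⟨2, ![-1, -1], ![-2, -3], ![1, 1], 1, ?_, ?_, ?_, ?_, ?_, ?_⟩
  · intro j; fin_cases j <;> norm_num
  · intro j; fin_cases j <;> norm_num
  · rintro ⟨v, hv⟩
    obtain ⟨c, hc⟩ := hv 0
    obtain ⟨d, hd⟩ := hv 1
    simp only [Matrix.cons_val_zero, Matrix.cons_val_one, Matrix.head_cons,
      Prod.smul_def, smul_eq_mul, Prod.mk.injEq] at hc hd
    obtain ⟨hc1, hc2⟩ := hc
    obtain ⟨hd1, hd2⟩ := hd
    have hc0 : c ≠ 0 := by rintro rfl; simp at hc1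
    have hd0 : d ≠ 0 := by rintro rfl; simp at hd1
    have hv1 : v.1 ≠ 0 := by rintro h; rw [h, mul_zero] at hc1; norm_num at hc1
    -- from hc: c = -1/v.1, and c*v.2 = -2 → v.2 = 2*v.1 ; from hd: v.2 = 3*v.1
    have h2 : v.2 * (-1) = 2 * v.1 := by
      have := hc2
      nlinarith [hc1, hc2]
    have h3 : v.2 * (-1) = 3 * v.1 := by nlinarith [hd1, hd2]
    have : v.1 = 0 := by linarith
    exact hv1 this
  · show (0:ℝ) < _
    simp [Fin.sum_univ_two]; norm_num
  · show (0:ℝ) < _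
    simp [Fin.sum_univ_two]; norm_num
  · intro Δt hΔt
    simp only [Fin.sum_univ_two]
    norm_num
    nlinarith
end
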